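/- For probability mass functions on {0,1}: for any a, b ∈ [7/16, 9/16] (viewed as Bernoulli parameters), the squared Hellinger distance satisfies (a−b)²/8 ≤ d_H²(a,b) ≤ (a−b)². -/
import Mathlib


/-- Squared Hellinger distance between `Bernoulli(a)` and `Bernoulli(b)`. -/
noncomputable def bernoulliHellingerSq (a b : ℝ) : ℝ :=
  (1 / 2) * ((Real.sqrt a - Real.sqrt b) ^ 2 +
    (Real.sqrt (1 - a) - Real.sqrt (1 - b)) ^ 2)

lemma hellinger_aux (x y : ℝ) (hx1 : (7:ℝ)/16 ≤ x) (hx2 : x ≤ 9/16)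
    (hy1 : (7:ℝ)/16 ≤ y) (hy2 : y ≤ 9/16) :
    4/9 * (x - y) ^ 2 ≤ (Real.sqrt x - Real.sqrt y) ^ 2 ∧
      (Real.sqrt x - Real.sqrt y) ^ 2 ≤ 4/7 * (x - y) ^ 2 := by
  set u := Real.sqrt x with hu
  set v := Real.sqrt y with hv
  have hu0 : 0 ≤ u := Real.sqrt_nonneg x
  have hv0 : 0 ≤ v := Real.sqrt_nonneg y
  have hu2 : u ^ 2 = x := Real.sq_sqrt (by linarith)
  have hv2 : v ^ 2 = y := Real.sq_sqrt (by linarith)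
  have huv : u * v = Real.sqrt (x * y) := (Real.sqrt_mul (by linarith) y).symm
  have huv1 : 7/16 ≤ u * v := by
    have h1 : (0:ℝ) ≤ u * v := mul_nonneg hu0 hv0
    have h2 : (u * v) ^ 2 = x * y := by rw [mul_pow, hu2, hv2]
    nlinarith
  have hsum2 : 7/4 ≤ (u + v) ^ 2 := by nlinarith
  have hsum2' : (u + v) ^ 2 ≤ 9/4 := by
    have hub : u ≤ 3/4 := by nlinarith
    have hvb : v ≤ 3/4 := by nlinarith
    nlinarith
  have key : (x - y) ^ 2 = (u - v) ^ 2 * (u + v) ^ 2 := by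
    rw [← hu2, ← hv2]; ring
  constructor
  · nlinarith [sq_nonneg (u - v)]
  · nlinarith [sq_nonneg (u - v)]

/-- For Bernoulli parameters `a, b ∈ [7/16, 9/16]`:
`(a−b)²/8 ≤ d_H²(a,b) ≤ (a−b)²`. -/
theorem bernoulli_hellinger_equiv_middle
    (a b : ℝ) (ha : a ∈ Set.Icc (7 / 16 : ℝ) (9 / 16))
    (hb : b ∈ Set.Icc (7 / 16 : ℝ) (9 / 16)) :
    (a - b) ^ 2 / 8 ≤ bernoulliHellingerSq a b ∧
      bernoulliHellingerSq a b ≤ (a - b) ^ 2 := by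
  obtain ⟨ha1, ha2⟩ := ha
  obtain ⟨hb1, hb2⟩ := hb
  have h1 := hellinger_aux a b ha1 ha2 hb1 hb2
  have h2 := hellinger_aux (1 - a) (1 - b) (by linarith) (by linarith)
    (by linarith) (by linarith)
  have he : (1 - a - (1 - b)) ^ 2 = (a - b) ^ 2 := by ring
  rw [he] at h2
  unfold bernoulliHellingerSq
  constructor <;> [linarith [h1.1, h2.1]; linarith [h1.2, h2.2, sq_nonneg (a - b)]]
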